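/- Assume conditions (P0)–(P3) hold for the sequence (q_{M_L}, φ_{M_L}) indexed by even positive integers L, and assume M_L² / log L → ∞ as L → ∞. Then lim_{L→∞} (1/L²) ∑_{y ∈ T'_L} 1 / (1 − φ_{M_L}(2π y / L)) = 1. -/

import Mathlib

open Filter MeasureTheory Real Finset
open scoped BigOperators

noncomputable section

/-- `T_k = (−k/2, k/2]² ∩ ℤ²`. -/
def Tset (k : ℝ) : Finset (ℤ × ℤ) :=
  Finset.Ioc ⌊-k / 2⌋ ⌊k / 2⌋ ×ˢ Finset.Ioc ⌊-k / 2⌋ ⌊k / 2⌋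

/-- `Λ_k = [−k/2, k/2]² ∩ ℤ²`. -/
def Lam (k : ℝ) : Finset (ℤ × ℤ) :=
  Finset.Icc ⌈-k / 2⌉ ⌊k / 2⌋ ×ˢ Finset.Icc ⌈-k / 2⌉ ⌊k / 2⌋

open scoped Classical in
/-- `D_k = {x ∈ ℤ² : |x| ≤ k/2}` (Euclidean norm). -/
def Dset (k : ℝ) : Finset (ℤ × ℤ) :=
  (Lam k).filter fun x => Real.sqrt ((x.1 : ℝ) ^ 2 + (x.2 : ℝ) ^ 2) ≤ k / 2

/-- sup (ℓ∞) norm on ℝ². -/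
def supNorm (θ : ℝ × ℝ) : ℝ := max |θ.1| |θ.2|

/-- the closed ℓ∞-ball `B(r)` in ℝ². -/
def Bset (r : ℝ) : Set (ℝ × ℝ) := {θ | supNorm θ ≤ r}

/-- squared Euclidean norm `|θ|²` on ℝ². -/
def sqNormR (θ : ℝ × ℝ) : ℝ := θ.1 ^ 2 + θ.2 ^ 2

/-- squared Euclidean norm `|y|²` of a lattice point. -/
def sqNorm (y : ℤ × ℤ) : ℝ := (y.1 : ℝ) ^ 2 + (y.2 : ℝ) ^ 2

/-- dot product `θ · x` of θ ∈ ℝ² and x ∈ ℤ². -/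
def dotP (θ : ℝ × ℝ) (x : ℤ × ℤ) : ℝ := θ.1 * x.1 + θ.2 * x.2

/-- `e^{iθ·x}`. -/
def cexp (θ : ℝ × ℝ) (x : ℤ × ℤ) : ℂ := Complex.exp (Complex.I * (dotP θ x : ℂ))

/-- `e^{2πi x·y/L}`. -/
def eL (L : ℕ) (x y : ℤ × ℤ) : ℂ :=
  Complex.exp (2 * (π : ℂ) * Complex.I * ((x.1 * y.1 + x.2 * y.2 : ℤ) : ℂ) / (L : ℂ))

/-- the filter of large even natural numbers. -/
def evenAtTop : Filter ℕ := Filter.atTop ⊓ Filter.principal {n | Even n}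

/-- the Fourier point `2πy/L ∈ ℝ²`. -/
def fourierTheta (L : ℕ) (y : ℤ × ℤ) : ℝ × ℝ := (2 * π * y.1 / L, 2 * π * y.2 / L)

/-- the characteristic function `φ(θ) = ∑_x e^{iθ·x} q(x)` of a jump distribution
supported in `Λ_m`; it is real-valued by symmetry, so we take the real part. -/
def phiOf (m : ℕ) (qq : ℤ × ℤ → ℝ) (θ : ℝ × ℝ) : ℝ :=
  (∑ x ∈ Lam m, cexp θ x * (qq x : ℂ)).re

/-- Condition (P0): `q` is a symmetric probability distribution supported in
`Λ'_m = Λ_m \ {0}`, with values in [0,1] and equal, positive coordinate variances. -/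
def CondP0 (m : ℕ) (qq : ℤ × ℤ → ℝ) : Prop :=
  (∀ x, 0 ≤ qq x ∧ qq x ≤ 1) ∧
  (∀ x, x ∉ (Lam m).erase 0 → qq x = 0) ∧
  (∑ x ∈ (Lam m).erase 0, qq x = 1) ∧
  (∀ x, qq (-x) = qq x) ∧
  (∑ x ∈ Lam m, (x.1 : ℝ) ^ 2 * qq x = ∑ x ∈ Lam m, (x.2 : ℝ) ^ 2 * qq x) ∧
  (0 < ∑ x ∈ Lam m, (x.1 : ℝ) ^ 2 * qq x)

/-- Condition (P1) with constant `σ² = σ2`. -/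
def CondP1 (M : ℕ → ℕ) (q : ℕ → ℤ × ℤ → ℝ) (σ2 : ℝ) : Prop :=
  ∀ ε > (0 : ℝ), ∃ δ > (0 : ℝ), ∀ᶠ L in evenAtTop, ∀ θ : ℝ × ℝ, θ ≠ 0 →
    supNorm θ ≤ δ / M L →
    (1 - phiOf (M L) (q L) θ) / (σ2 * (M L : ℝ) ^ 2 * sqNormR θ / 2)
      ∈ Set.Ioo (1 - ε) (1 + ε)

/-- Condition (P2). -/
def CondP2 (M : ℕ → ℕ) (q : ℕ → ℤ × ℤ → ℝ) : Prop :=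
  ∀ δ > (0 : ℝ), ∃ δ' > (0 : ℝ), ∃ ζ > (0 : ℝ), ∀ᶠ L in evenAtTop, ∀ θ : ℝ × ℝ,
    supNorm θ ≤ δ' → ¬ supNorm θ ≤ δ / M L → 1 - phiOf (M L) (q L) θ > ζ

/-- Condition (P3). -/
def CondP3 (M : ℕ → ℕ) (q : ℕ → ℤ × ℤ → ℝ) : Prop :=
  ∀ ε > (0 : ℝ), ∀ a > (0 : ℝ), ∀ᶠ L in evenAtTop, ∀ θ : ℝ × ℝ,
    supNorm θ ≤ π → ¬ supNorm θ ≤ a → |phiOf (M L) (q L) θ| < ε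

/-- `G_L(x,λ) = L⁻² ∑_{y ∈ T_L} e^{2πi x·y/L} / (1 + λ − φ_{M_L}(2πy/L))`. -/
def Gfun (M : ℕ → ℕ) (q : ℕ → ℤ × ℤ → ℝ) (L : ℕ) (x : ℤ × ℤ) (lam : ℝ) : ℂ :=
  ((L : ℂ) ^ 2)⁻¹ * ∑ y ∈ Tset L,
    eL L x y / ((1 + lam - phiOf (M L) (q L) (fourierTheta L y) : ℝ) : ℂ)

open scoped Classical in
/-- the annulus `A_L(α, v)`. -/
def Aset (L : ℕ) (α v : ℝ) : Finset (ℤ × ℤ) :=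
  if α = 0 then (Tset v).erase 0
  else if α = 1 then Tset L \ Tset (L / v)
  else Tset ((L : ℝ) ^ α * v) \ Tset ((L : ℝ) ^ α / v)

/-- the uniform distribution `u_m` on `Λ'_m = Λ_m \ {0}`. -/
def uunif (m : ℕ) (x : ℤ × ℤ) : ℝ :=
  if x ∈ (Lam m).erase 0 then (((Lam m).erase 0).card : ℝ)⁻¹ else 0

/-- `q_M(x) = c_M f(x/M) u_M(x)`. -/
def qMf (f : ℝ × ℝ → ℝ) (c : ℕ → ℝ) (m : ℕ) (x : ℤ × ℤ) : ℝ :=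
  c m * f ((x.1 : ℝ) / m, (x.2 : ℝ) / m) * uunif m x


/-!
Write `g y = (1 - φ (2πy/L))⁻¹` and sort the points `y ∈ T'_L` by the size of `θ = 2πy/L`.
Where `|θ|_∞ ≤ δ/M`, (P1) gives `g y ≤ L² / (σ² π² M² |y|²)`, and `∑_{y ∈ T'_L} |y|⁻² = O(log L)`;
this part is `o(L²)` because `M²/log L → ∞`. Where `δ/M < |θ|_∞ ≤ a`, (P2) gives `g y ≤ ζ⁻¹`,
on `O(a² L²)` points. Where `|θ|_∞ > a`, (P3) gives `|g y - 1| ≤ 2ε`. Hence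
`|L⁻² ∑ g - 1| ≤ 2ε + O(a²) (1 + ζ⁻¹) + o(1)`, and `ζ` does not depend on `a` or `ε`.
-/

lemma sqNorm_pos {y : ℤ × ℤ} (hy : y ≠ 0) : 0 < sqNorm y := by
  have : (y.1 : ℝ) ≠ 0 ∨ (y.2 : ℝ) ≠ 0 := by
    contrapose! hy
    exact Prod.ext (by exact_mod_cast hy.1) (by exact_mod_cast hy.2)
  unfold sqNorm
  rcases this with h | h <;> positivity

lemma sq_max_natAbs_le_sqNorm (y : ℤ × ℤ) :
    ((max y.1.natAbs y.2.natAbs : ℕ) : ℝ) ^ 2 ≤ sqNorm y := by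
  unfold sqNorm
  rcases max_choice y.1.natAbs y.2.natAbs with h | h <;>
  · rw [h, Nat.cast_natAbs, Int.cast_abs, sq_abs]
    nlinarith [sq_nonneg (y.1 : ℝ), sq_nonneg (y.2 : ℝ)]

lemma sum_inv_sqNorm_box_le (n : ℕ) : ∑ y ∈ box n, (sqNorm y)⁻¹ ≤ 8 * (n : ℝ)⁻¹ := by
  rcases Nat.eq_zero_or_pos n with rfl | hn
  · simp [sqNorm]
  calc ∑ y ∈ box n, (sqNorm y)⁻¹ ≤ ∑ _y ∈ box n, ((n : ℝ) ^ 2)⁻¹ := by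
        refine sum_le_sum fun y hy => inv_anti₀ (by positivity) ?_
        simpa only [Int.mem_box.mp hy] using sq_max_natAbs_le_sqNorm y
    _ = 8 * (n : ℝ)⁻¹ := by
        rw [sum_const, Int.card_box hn.ne', nsmul_eq_mul]
        field_simp
        push_cast
        ring

/-- Grouping the points by their sup norm `k`, each of the `8k` points at level `k` contributes
at most `k⁻²`. -/
lemma sum_inv_sqNorm_le_harmonic {s : Finset (ℤ × ℤ)} {N : ℕ} (h0 : (0 : ℤ × ℤ) ∉ s)
    (hN : ∀ y ∈ s, y.1.natAbs ≤ N ∧ y.2.natAbs ≤ N) :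
    ∑ y ∈ s, (sqNorm y)⁻¹ ≤ 8 * (harmonic N : ℝ) := by
  have hmaps : ∀ y ∈ s, max y.1.natAbs y.2.natAbs ∈ Icc 1 N := by
    intro y hy
    have hy0 : y ≠ 0 := ne_of_mem_of_not_mem hy h0
    have : y.1 ≠ 0 ∨ y.2 ≠ 0 := by
      contrapose! hy0
      exact Prod.ext hy0.1 hy0.2
    have := hN y hy
    simp only [mem_Icc]
    omega
  rw [← sum_fiberwise_of_maps_to hmaps, harmonic_eq_sum_Icc, Rat.cast_sum, mul_sum]
  refine sum_le_sum fun k _ => ?_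
  calc ∑ y ∈ s with max y.1.natAbs y.2.natAbs = k, (sqNorm y)⁻¹
      ≤ ∑ y ∈ box k, (sqNorm y)⁻¹ := by
        refine sum_le_sum_of_subset_of_nonneg (fun y hy => ?_) fun y _ _ => ?_
        · exact Int.mem_box.mpr (mem_filter.mp hy).2
        · unfold sqNorm; positivity
    _ ≤ 8 * (k : ℝ)⁻¹ := sum_inv_sqNorm_box_le k
    _ = 8 * ((k⁻¹ : ℚ) : ℝ) := by push_cast; rfl

lemma Tset_natCast (L : ℕ) :
    Tset L = Ioc (-(L : ℤ) / 2) ((L : ℤ) / 2) ×ˢ Ioc (-(L : ℤ) / 2) ((L : ℤ) / 2) := by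
  have hfloor (n : ℤ) : ⌊(n : ℝ) / 2⌋ = n / 2 := by
    rw [← Nat.cast_ofNat, Int.floor_div_natCast, Int.floor_intCast]
    rfl
  rw [Tset, ← hfloor, ← hfloor]
  push_cast
  rfl

lemma card_Tset (L : ℕ) : #(Tset L) = L ^ 2 := by
  rw [Tset_natCast, card_product, Int.card_Ioc, sq]
  congr 1 <;> omega

lemma zero_mem_Tset {L : ℕ} (hL : 0 < L) : (0 : ℤ × ℤ) ∈ Tset L := by
  rw [Tset_natCast]
  simp only [mem_product, mem_Ioc, Prod.fst_zero, Prod.snd_zero]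
  omega

lemma two_mul_natAbs_le_of_mem_Tset {L : ℕ} {y : ℤ × ℤ} (hy : y ∈ Tset L) :
    2 * y.1.natAbs ≤ L ∧ 2 * y.2.natAbs ≤ L := by
  rw [Tset_natCast] at hy
  simp only [mem_product, mem_Ioc] at hy
  omega

lemma sum_inv_sqNorm_Tset_erase_le (L : ℕ) :
    ∑ y ∈ (Tset L).erase 0, (sqNorm y)⁻¹ ≤ 8 * (1 + Real.log L) := by
  refine (sum_inv_sqNorm_le_harmonic (N := L) (notMem_erase 0 _) fun y hy => ?_).trans ?_
  · have := two_mul_natAbs_le_of_mem_Tset (mem_of_mem_erase hy)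
    omega
  · have := harmonic_le_one_add_log L
    gcongr

lemma supNorm_fourierTheta (L : ℕ) (y : ℤ × ℤ) :
    supNorm (fourierTheta L y) = 2 * π / L * max y.1.natAbs y.2.natAbs := by
  have habs (k : ℤ) : |2 * π * k / L| = 2 * π / L * k.natAbs := by
    rw [Nat.cast_natAbs, Int.cast_abs, mul_div_right_comm, abs_mul,
      abs_of_nonneg (by positivity)]
  rw [supNorm, fourierTheta, habs, habs, Nat.cast_max, mul_max_of_nonneg _ _ (by positivity)]

lemma supNorm_fourierTheta_le_pi {L : ℕ} {y : ℤ × ℤ} (hy : y ∈ Tset L) :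
    supNorm (fourierTheta L y) ≤ π := by
  rcases Nat.eq_zero_or_pos L with rfl | hL
  · simp [supNorm_fourierTheta, pi_nonneg]
  have hmax : 2 * ((max y.1.natAbs y.2.natAbs : ℕ) : ℝ) ≤ L := by
    have := two_mul_natAbs_le_of_mem_Tset hy
    exact_mod_cast (by omega : 2 * max y.1.natAbs y.2.natAbs ≤ L)
  rw [supNorm_fourierTheta, div_mul_eq_mul_div, div_le_iff₀ (by positivity)]
  nlinarith [pi_pos]

lemma sqNormR_fourierTheta (L : ℕ) (y : ℤ × ℤ) :
    sqNormR (fourierTheta L y) = (2 * π / L) ^ 2 * sqNorm y := by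
  simp only [sqNormR, fourierTheta, sqNorm]
  ring

lemma fourierTheta_ne_zero {L : ℕ} (hL : 0 < L) {y : ℤ × ℤ} (hy : y ≠ 0) :
    fourierTheta L y ≠ 0 := by
  intro h
  have hpos : 0 < sqNormR (fourierTheta L y) := by
    rw [sqNormR_fourierTheta]
    have := sqNorm_pos hy
    have : (0 : ℝ) < L := by exact_mod_cast hL
    positivity
  simp [h, sqNormR] at hpos

lemma card_filter_supNorm_fourierTheta_le (L : ℕ) {a : ℝ} (ha : 0 ≤ a) :
    (#{y ∈ Tset L | supNorm (fourierTheta L y) ≤ a} : ℝ) ≤ (a * L / π + 1) ^ 2 := by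
  set n := ⌊a * L / (2 * π)⌋₊
  have hsub : {y ∈ Tset L | supNorm (fourierTheta L y) ≤ a} ⊆
      Icc (-(n : ℤ)) n ×ˢ Icc (-(n : ℤ)) n := by
    intro y hy
    rcases Nat.eq_zero_or_pos L with rfl | hL
    · simp [Tset] at hy
    have hmax : ((max y.1.natAbs y.2.natAbs : ℕ) : ℝ) ≤ a * L / (2 * π) := by
      rw [le_div_iff₀ (by positivity)]
      have := (mem_filter.mp hy).2
      rw [supNorm_fourierTheta, div_mul_eq_mul_div, div_le_iff₀ (by positivity)] at this
      linarith
    have := Nat.le_floor hmax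
    simp only [mem_product, mem_Icc]
    omega
  have hcard : #(Icc (-(n : ℤ)) n ×ˢ Icc (-(n : ℤ)) n) = (2 * n + 1) ^ 2 := by
    rw [card_product, Int.card_Icc, sq]
    congr 1 <;> omega
  have hn : 2 * (n : ℝ) ≤ a * L / π := by
    have := Nat.floor_le (show 0 ≤ a * L / (2 * π) by positivity)
    rw [show a * L / π = 2 * (a * L / (2 * π)) by field_simp]
    linarith
  calc (#{y ∈ Tset L | supNorm (fourierTheta L y) ≤ a} : ℝ)
      ≤ ((2 * n + 1) ^ 2 : ℕ) := by rw [← hcard]; exact_mod_cast card_le_card hsub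
    _ ≤ (a * L / π + 1) ^ 2 := by push_cast; gcongr

lemma abs_inv_one_sub_sub_one_le_two_mul {x ε : ℝ} (hx : |x| < ε) (hε : ε ≤ 1 / 2) :
    |(1 - x)⁻¹ - 1| ≤ 2 * ε := by
  have hx' := abs_lt.mp hx
  have hpos : 0 < 1 - x := by linarith
  rw [show (1 - x)⁻¹ - 1 = x * (1 - x)⁻¹ by field_simp; ring, abs_mul,
    abs_of_pos (inv_pos.mpr hpos), ← div_eq_mul_inv, div_le_iff₀ hpos]
  nlinarith [abs_nonneg x]

lemma inv_lt_two_div_of_half_lt_div {n d : ℝ} (hd : 0 ≤ d) (h : 1 / 2 < n / d) :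
    0 < n ∧ n⁻¹ < 2 / d := by
  have hd' : 0 < d := hd.lt_of_ne <| by
    rintro rfl
    norm_num at h
  rw [lt_div_iff₀ hd'] at h
  have hn : 0 < n := by linarith
  refine ⟨hn, ?_⟩
  rw [inv_lt_comm₀ hn (by positivity), inv_div]
  linarith

/-- What (P1) with `ε = 1/2`, (P2) and (P3) provide at a fixed `L`, with `m = M_L`. -/
structure ThreeRegionBounds (φ : ℝ × ℝ → ℝ) (σ2 m δ a ζ ε : ℝ) : Prop where
  inner : ∀ θ : ℝ × ℝ, θ ≠ 0 → supNorm θ ≤ δ / m →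
    1 / 2 < (1 - φ θ) / (σ2 * m ^ 2 * sqNormR θ / 2)
  middle : ∀ θ : ℝ × ℝ, supNorm θ ≤ a → ¬ supNorm θ ≤ δ / m → ζ < 1 - φ θ
  outer : ∀ θ : ℝ × ℝ, supNorm θ ≤ π → ¬ supNorm θ ≤ a → |φ θ| < ε

section ThreeRegionBounds

variable {φ : ℝ × ℝ → ℝ} {σ2 m δ a ζ ε : ℝ}

lemma ThreeRegionBounds.abs_inv_one_sub_sub_one_le (h : ThreeRegionBounds φ σ2 m δ a ζ ε)
    (hσ2 : 0 ≤ σ2) (hζ : 0 < ζ) (hε0 : 0 ≤ ε) (hε : ε ≤ 1 / 2) {θ : ℝ × ℝ} (hθ0 : θ ≠ 0)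
    (hθπ : supNorm θ ≤ π) :
    |(1 - φ θ)⁻¹ - 1| ≤
      2 * ε + (if supNorm θ ≤ a then 1 + ζ⁻¹ else 0) + 4 / (σ2 * m ^ 2 * sqNormR θ) := by
  have hinner_nonneg : 0 ≤ 4 / (σ2 * m ^ 2 * sqNormR θ) := by unfold sqNormR; positivity
  have habs {x : ℝ} (hx : 0 < x) : |x⁻¹ - 1| ≤ x⁻¹ + 1 := by
    rw [abs_le]; constructor <;> linarith [inv_pos.mpr hx]
  by_cases hsmall : supNorm θ ≤ a
  · rw [if_pos hsmall]
    by_cases hin : supNorm θ ≤ δ / m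
    · obtain ⟨hpos, hlt⟩ := inv_lt_two_div_of_half_lt_div (by unfold sqNormR; positivity)
        (h.inner θ hθ0 hin)
      have : 2 / (σ2 * m ^ 2 * sqNormR θ / 2) = 4 / (σ2 * m ^ 2 * sqNormR θ) := by ring
      linarith [habs hpos, inv_pos.mpr hζ]
    · have hlt := h.middle θ hsmall hin
      have := inv_strictAnti₀ hζ hlt
      linarith [habs (hζ.trans hlt)]
  · rw [if_neg hsmall]
    linarith [abs_inv_one_sub_sub_one_le_two_mul (h.outer θ hθπ hsmall) hε]

lemma ThreeRegionBounds.sum_abs_inv_one_sub_sub_one_le (h : ThreeRegionBounds φ σ2 m δ a ζ ε)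
    (hσ2 : 0 ≤ σ2) (hζ : 0 < ζ) (hε0 : 0 ≤ ε) (hε : ε ≤ 1 / 2) (ha : 0 ≤ a) {L : ℕ} (hL : 0 < L) :
    ∑ y ∈ (Tset L).erase 0, |(1 - φ (fourierTheta L y))⁻¹ - 1| ≤
      2 * ε * L ^ 2 + (a * L / π + 1) ^ 2 * (1 + ζ⁻¹) +
        L ^ 2 / (σ2 * π ^ 2 * m ^ 2) * (8 * (1 + Real.log L)) := by
  set T' := (Tset L).erase 0
  have hpoint : ∀ y ∈ T', |(1 - φ (fourierTheta L y))⁻¹ - 1| ≤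
      2 * ε + (if supNorm (fourierTheta L y) ≤ a then 1 + ζ⁻¹ else 0) +
        L ^ 2 / (σ2 * π ^ 2 * m ^ 2) * (sqNorm y)⁻¹ := by
    intro y hy
    have hL' : (L : ℝ) ≠ 0 := by positivity
    convert h.abs_inv_one_sub_sub_one_le hσ2 hζ hε0 hε
      (fourierTheta_ne_zero hL (ne_of_mem_erase hy))
      (supNorm_fourierTheta_le_pi (mem_of_mem_erase hy)) using 2
    rw [sqNormR_fourierTheta]
    field_simp
    norm_num
  have hcardT' : (#T' : ℝ) ≤ L ^ 2 := by
    exact_mod_cast (card_erase_le).trans (card_Tset L).le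
  have hcard_small : (#{y ∈ T' | supNorm (fourierTheta L y) ≤ a} : ℝ) ≤ (a * L / π + 1) ^ 2 :=
    le_trans (by exact_mod_cast card_le_card (filter_subset_filter _ (erase_subset 0 _)))
      (card_filter_supNorm_fourierTheta_le L ha)
  refine (sum_le_sum hpoint).trans ?_
  rw [sum_add_distrib, sum_add_distrib, sum_ite, ← mul_sum _ _ (_ / _)]
  simp only [sum_const, nsmul_eq_mul, mul_zero, add_zero]
  have hC : 0 ≤ (L : ℝ) ^ 2 / (σ2 * π ^ 2 * m ^ 2) := by positivity
  linarith [mul_le_mul_of_nonneg_left (sum_inv_sqNorm_Tset_erase_le L) hC,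
    mul_le_mul_of_nonneg_right hcardT' (by positivity : (0 : ℝ) ≤ 2 * ε),
    mul_le_mul_of_nonneg_right hcard_small (by positivity : 0 ≤ 1 + ζ⁻¹)]

lemma ThreeRegionBounds.abs_inv_sq_mul_sum_sub_one_le (h : ThreeRegionBounds φ σ2 m δ a ζ ε)
    (hσ2 : 0 ≤ σ2) (hζ : 0 < ζ) (hε0 : 0 ≤ ε) (hε : ε ≤ 1 / 2) (ha : 0 ≤ a) {L : ℕ} (hL : 0 < L) :
    |((L : ℝ) ^ 2)⁻¹ * ∑ y ∈ (Tset L).erase 0, (1 - φ (fourierTheta L y))⁻¹ - 1| ≤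
      2 * ε + (a / π + 1 / L) ^ 2 * (1 + ζ⁻¹) +
        8 / (σ2 * π ^ 2) * ((1 + Real.log L) / m ^ 2) + (1 / L) ^ 2 := by
  set g : ℤ × ℤ → ℝ := fun y => (1 - φ (fourierTheta L y))⁻¹
  have hL' : (L : ℝ) ≠ 0 := by positivity
  have hcard : (#((Tset L).erase 0) : ℝ) = L ^ 2 - 1 := by
    rw [card_erase_of_mem (zero_mem_Tset hL), card_Tset, Nat.cast_sub (Nat.one_le_pow _ _ hL)]
    push_cast
    rfl
  have hcentre : ((L : ℝ) ^ 2)⁻¹ * ∑ y ∈ (Tset L).erase 0, g y - 1 =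
      ((L : ℝ) ^ 2)⁻¹ * ∑ y ∈ (Tset L).erase 0, (g y - 1) - (1 / L) ^ 2 := by
    rw [sum_sub_distrib, sum_const, nsmul_one, hcard]
    field_simp
    ring
  rw [hcentre]
  calc _ ≤ |((L : ℝ) ^ 2)⁻¹ * ∑ y ∈ (Tset L).erase 0, (g y - 1)| + |(1 / (L : ℝ)) ^ 2| :=
        abs_sub _ _
    _ ≤ ((L : ℝ) ^ 2)⁻¹ * (2 * ε * L ^ 2 + (a * L / π + 1) ^ 2 * (1 + ζ⁻¹) +
          L ^ 2 / (σ2 * π ^ 2 * m ^ 2) * (8 * (1 + Real.log L))) + (1 / L) ^ 2 := by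
        rw [abs_mul, abs_of_pos (by positivity : (0 : ℝ) < ((L : ℝ) ^ 2)⁻¹),
          abs_of_nonneg (by positivity : (0 : ℝ) ≤ (1 / (L : ℝ)) ^ 2)]
        gcongr
        exact (abs_sum_le_sum_abs _ _).trans
          (h.sum_abs_inv_one_sub_sub_one_le hσ2 hζ hε0 hε ha hL)
    _ = _ := by field_simp

end ThreeRegionBounds

lemma tendsto_of_forall_eventually_abs_sub_le {α : Type*} {l : Filter α} {u : α → ℝ} {x : ℝ}
    (h : ∀ η > 0, ∃ b : α → ℝ, ∃ r < η, Tendsto b l (nhds r) ∧ ∀ᶠ n in l, |u n - x| ≤ b n) :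
    Tendsto u l (nhds x) := by
  refine Metric.tendsto_nhds.mpr fun η hη => ?_
  obtain ⟨b, r, hr, hb, hub⟩ := h η hη
  filter_upwards [hub, hb.eventually (gt_mem_nhds hr)] with n hn hbn
  rw [Real.dist_eq]
  linarith

lemma tendsto_one_add_div_of_tendsto_div_atTop {α : Type*} {l : Filter α} {u f : α → ℝ}
    (hu : Tendsto u l atTop) (hf : Tendsto (fun n => f n / u n) l atTop) :
    Tendsto (fun n => (1 + u n) / f n) l (nhds 0) := by
  have hlim : Tendsto (fun n => (f n / u n)⁻¹ * (1 + (u n)⁻¹)) l (nhds (0 * (1 + 0))) :=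
    hf.inv_tendsto_atTop.mul (tendsto_const_nhds.add hu.inv_tendsto_atTop)
  rw [zero_mul] at hlim
  refine hlim.congr' ?_
  filter_upwards [hu.eventually_gt_atTop 0] with n hn
  field_simp
  ring

theorem sum_over_torus_tendsto_one_general (M : ℕ → ℕ) (q : ℕ → ℤ × ℤ → ℝ) (σ2 : ℝ) (hσ : 0 < σ2)
    (hP1 : CondP1 M q σ2) (hP2 : CondP2 M q) (hP3 : CondP3 M q)
    (hM2 : Tendsto (fun L : ℕ => (M L : ℝ) ^ 2 / Real.log L) evenAtTop atTop) :
    Tendsto (fun L : ℕ => ((L : ℝ) ^ 2)⁻¹ *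
        ∑ y ∈ (Tset L).erase 0, (1 - phiOf (M L) (q L) (fourierTheta L y))⁻¹)
      evenAtTop (nhds 1) := by
  have hl : evenAtTop ≤ atTop := inf_le_left
  have hinv : Tendsto (fun L : ℕ => 1 / (L : ℝ)) evenAtTop (nhds 0) :=
    tendsto_one_div_atTop_nhds_zero_nat.mono_left hl
  have hlog : Tendsto (fun L : ℕ => (1 + Real.log L) / (M L : ℝ) ^ 2) evenAtTop (nhds 0) :=
    tendsto_one_add_div_of_tendsto_div_atTop
      ((tendsto_log_atTop.comp tendsto_natCast_atTop_atTop).mono_left hl) hM2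
  obtain ⟨δ, hδ, hinner⟩ := hP1 (1 / 2) one_half_pos
  obtain ⟨δ', hδ', ζ, hζ, hmiddle⟩ := hP2 δ hδ
  refine tendsto_of_forall_eventually_abs_sub_le fun η hη => ?_
  -- `ζ` depends only on `δ`, so `a` can be taken small after `ζ` is fixed.
  obtain ⟨a, ⟨ha, haδ'⟩, haη⟩ : ∃ a ∈ Set.Ioc 0 δ', (a / π) ^ 2 * (1 + ζ⁻¹) < η / 2 := by
    have hcont : Tendsto (fun a : ℝ => (a / π) ^ 2 * (1 + ζ⁻¹)) (nhds 0) (nhds 0) := by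
      simpa using ((continuous_id.div_const π).pow 2).mul_const (1 + ζ⁻¹) |>.tendsto 0
    exact (Filter.Eventually.and (Ioc_mem_nhdsGT hδ')
      ((hcont.eventually (gt_mem_nhds (half_pos hη))).filter_mono nhdsWithin_le_nhds)).exists
  obtain ⟨ε, hε, hεη, hε2⟩ : ∃ ε > 0, ε ≤ η / 8 ∧ ε ≤ 1 / 2 :=
    ⟨min (η / 8) (1 / 2), lt_min (by positivity) one_half_pos, min_le_left _ _, min_le_right _ _⟩
  have hbound := ((tendsto_const_nhds (x := 2 * ε)).add
    ((((tendsto_const_nhds (x := a / π)).add hinv).pow 2).mul_const (1 + ζ⁻¹))).add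
    (hlog.const_mul (8 / (σ2 * π ^ 2))) |>.add (hinv.pow 2)
  refine ⟨_, _, ?_, hbound, ?_⟩
  · norm_num
    linarith
  · filter_upwards [hinner, hmiddle, hP3 ε hε a ha, hl (eventually_gt_atTop 0)]
      with L hin hmid hout hL
    refine ThreeRegionBounds.abs_inv_sq_mul_sum_sub_one_le ⟨fun θ hθ hs => ?_,
      fun θ hs hs' => hmid θ (hs.trans haδ') hs', hout⟩ hσ.le hζ hε.le hε2 ha.le hL
    exact lt_of_eq_of_lt (by norm_num) (hin θ hθ hs).1

/-- Equation (5.4): if (P0)–(P3) hold and `M_L²/log L → ∞`, then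
`L⁻² ∑_{y ∈ T'_L} 1/(1 − φ_{M_L}(2πy/L)) → 1`. -/
theorem sum_over_torus_tendsto_one (M : ℕ → ℕ) (q : ℕ → ℤ × ℤ → ℝ) (σ2 : ℝ) (hσ : 0 < σ2)
    (hMeven : ∀ L : ℕ, Even (M L) ∧ 0 < M L)
    (hP0 : ∀ L : ℕ, Even L → 0 < L → CondP0 (M L) (q L))
    (hP1 : CondP1 M q σ2) (hP2 : CondP2 M q) (hP3 : CondP3 M q)
    (hM2 : Tendsto (fun L : ℕ => (M L : ℝ) ^ 2 / Real.log L) evenAtTop atTop) :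
    Tendsto (fun L : ℕ => ((L : ℝ) ^ 2)⁻¹ *
        ∑ y ∈ (Tset L).erase 0, (1 - phiOf (M L) (q L) (fourierTheta L y))⁻¹)
      evenAtTop (nhds 1) :=
  sum_over_torus_tendsto_one_general M q σ2 hσ hP1 hP2 hP3 hM2
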